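/- Let Q₀ : Ω → ℂ be C¹ on open Ω ⊆ ℂ, suppose there exists a positive C² real-valued function f on Ω with ∂_z f / f = Q₀, and suppose Q₀ solves the Riccati equation ∂_z̄ Q₀ + |Q₀|² = ν/4. Let W = W₁ + iW₂ be a C¹ solution on Ω of the Vekua-type equation ∂_z̄ W = (∂_z̄ f/f)·conj(W). If W₁ is nonvanishing and C², then Q = (∂_z W₁)/W₁ is a solution of the same Riccati equation ∂_z̄ Q + |Q|² = ν/4. -/

import Mathlib

open Complex Set

/-- Partial derivative in the x-direction. -/
noncomputable def pdx (F : ℂ → ℂ) (z : ℂ) : ℂ := fderiv ℝ F z 1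
/-- Partial derivative in the y-direction. -/
noncomputable def pdy (F : ℂ → ℂ) (z : ℂ) : ℂ := fderiv ℝ F z Complex.I
/-- Wirtinger derivative ∂_z = (1/2)(∂_x − i∂_y). -/
noncomputable def dz (F : ℂ → ℂ) (z : ℂ) : ℂ := (pdx F z - Complex.I * pdy F z) / 2
/-- Wirtinger derivative ∂_z̄ = (1/2)(∂_x + i∂_y). -/
noncomputable def dzbar (F : ℂ → ℂ) (z : ℂ) : ℂ := (pdx F z + Complex.I * pdy F z) / 2
/-- Laplacian Δ = ∂_xx + ∂_yy. -/
noncomputable def lap (F : ℂ → ℂ) (z : ℂ) : ℂ := pdx (pdx F) z + pdy (pdy F) z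

section helpers
variable {F G : ℂ → ℂ} {z : ℂ}

lemma dz_congr (h : F =ᶠ[nhds z] G) : dz F z = dz G z := by
  unfold dz pdx pdy; rw [h.fderiv_eq]

lemma dzbar_congr (h : F =ᶠ[nhds z] G) : dzbar F z = dzbar G z := by
  unfold dzbar pdx pdy; rw [h.fderiv_eq]

lemma dz_add (hF : DifferentiableAt ℝ F z) (hG : DifferentiableAt ℝ G z) :
    dz (fun w => F w + G w) z = dz F z + dz G z := by
  simp only [dz, pdx, pdy, fderiv_fun_add hF hG, ContinuousLinearMap.add_apply]; ring

lemma dzbar_add (hF : DifferentiableAt ℝ F z) (hG : DifferentiableAt ℝ G z) :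
    dzbar (fun w => F w + G w) z = dzbar F z + dzbar G z := by
  simp only [dzbar, pdx, pdy, fderiv_fun_add hF hG, ContinuousLinearMap.add_apply]; ring

lemma dz_mul (hF : DifferentiableAt ℝ F z) (hG : DifferentiableAt ℝ G z) :
    dz (fun w => F w * G w) z = dz F z * G z + F z * dz G z := by
  simp only [dz, pdx, pdy, fderiv_fun_mul hF hG, ContinuousLinearMap.add_apply,
    ContinuousLinearMap.smul_apply, smul_eq_mul]; ring

lemma dzbar_mul (hF : DifferentiableAt ℝ F z) (hG : DifferentiableAt ℝ G z) :
    dzbar (fun w => F w * G w) z = dzbar F z * G z + F z * dzbar G z := by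
  simp only [dzbar, pdx, pdy, fderiv_fun_mul hF hG, ContinuousLinearMap.add_apply,
    ContinuousLinearMap.smul_apply, smul_eq_mul]; ring

lemma dz_const_mul (a : ℂ) (hF : DifferentiableAt ℝ F z) :
    dz (fun w => a * F w) z = a * dz F z := by
  simp only [dz, pdx, pdy, fderiv_const_mul hF a, ContinuousLinearMap.smul_apply,
    smul_eq_mul]; ring

lemma dzbar_const_mul (a : ℂ) (hF : DifferentiableAt ℝ F z) :
    dzbar (fun w => a * F w) z = a * dzbar F z := by
  simp only [dzbar, pdx, pdy, fderiv_const_mul hF a, ContinuousLinearMap.smul_apply,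
    smul_eq_mul]; ring

lemma dz_lin (a b : ℂ) (hF : DifferentiableAt ℝ F z) (hG : DifferentiableAt ℝ G z) :
    dz (fun w => a * F w + b * G w) z = a * dz F z + b * dz G z := by
  rw [dz_add (hF.const_mul a) (hG.const_mul b), dz_const_mul a hF, dz_const_mul b hG]

lemma dzbar_lin (a b : ℂ) (hF : DifferentiableAt ℝ F z) (hG : DifferentiableAt ℝ G z) :
    dzbar (fun w => a * F w + b * G w) z = a * dzbar F z + b * dzbar G z := by
  rw [dzbar_add (hF.const_mul a) (hG.const_mul b), dzbar_const_mul a hF, dzbar_const_mul b hG]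

lemma fderiv_conj_apply (hF : DifferentiableAt ℝ F z) (e : ℂ) :
    fderiv ℝ (fun w => (starRingEnd ℂ) (F w)) z e = (starRingEnd ℂ) (fderiv ℝ F z e) := by
  have h : fderiv ℝ (⇑Complex.conjCLE ∘ F) z = (Complex.conjCLE : ℂ ≃L[ℝ] ℂ).toContinuousLinearMap.comp (fderiv ℝ F z) :=
    Complex.conjCLE.comp_fderiv
  have h2 : (fun w => (starRingEnd ℂ) (F w)) = ⇑Complex.conjCLE ∘ F := rfl
  rw [h2, h]; rfl

lemma dzbar_conj (hF : DifferentiableAt ℝ F z) :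
    dzbar (fun w => (starRingEnd ℂ) (F w)) z = (starRingEnd ℂ) (dz F z) := by
  simp only [dzbar, dz, pdx, pdy, fderiv_conj_apply hF, map_div₀, map_sub, map_mul,
    Complex.conj_I, map_ofNat]
  ring

lemma dz_conj (hF : DifferentiableAt ℝ F z) :
    dz (fun w => (starRingEnd ℂ) (F w)) z = (starRingEnd ℂ) (dzbar F z) := by
  simp only [dzbar, dz, pdx, pdy, fderiv_conj_apply hF, map_div₀, map_add, map_mul,
    Complex.conj_I, map_ofNat]
  ring

lemma dzbar_real {g : ℂ → ℝ} (h : DifferentiableAt ℝ (fun w => (g w : ℂ)) z) :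
    dzbar (fun w => (g w : ℂ)) z = (starRingEnd ℂ) (dz (fun w => (g w : ℂ)) z) := by
  have e : (fun w => ((g w : ℝ) : ℂ)) = fun w => (starRingEnd ℂ) ((g w : ℝ) : ℂ) := by
    funext w; rw [Complex.conj_ofReal]
  nth_rewrite 1 [e]
  exact dzbar_conj h

lemma clm_ext_c {L M : ℂ →L[ℝ] ℂ} (h1 : L 1 = M 1) (hI : L Complex.I = M Complex.I) : L = M := by
  ext e
  have he : e = (e.re : ℝ) • (1 : ℂ) + (e.im : ℝ) • Complex.I := by
    simp [Complex.real_smul, Complex.re_add_im]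
  rw [he, map_add, map_add, map_smul, map_smul, map_smul, map_smul, h1, hI]

lemma fderiv_clm_apply_const {φ : ℂ → ℂ →L[ℝ] ℂ} (hφ : DifferentiableAt ℝ φ z) (c e : ℂ) :
    fderiv ℝ (fun w => φ w c) z e = fderiv ℝ φ z e c := by
  rw [fderiv_clm_apply hφ (differentiableAt_const c)]
  simp

end helpers

theorem euler_first_half
    (Ω : Set ℂ) (hΩ : IsOpen Ω) (Q₀ : ℂ → ℂ) (ν : ℂ → ℝ) (f : ℂ → ℝ) (W : ℂ → ℂ)
    (hQ₀ : ContDiffOn ℝ 1 Q₀ Ω)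
    (hf : ContDiffOn ℝ 2 (fun z => (f z : ℂ)) Ω)
    (hfpos : ∀ z ∈ Ω, 0 < f z)
    (hlog : ∀ z ∈ Ω, dz (fun w => (f w : ℂ)) z / (f z : ℂ) = Q₀ z)
    (hRic₀ : ∀ z ∈ Ω, dzbar Q₀ z + (‖Q₀ z‖ ^ 2 : ℂ) = (ν z : ℂ) / 4)
    (hW : ContDiffOn ℝ 1 W Ω)
    (hVekua : ∀ z ∈ Ω,
      dzbar W z = dzbar (fun w => (f w : ℂ)) z / (f z : ℂ) * (starRingEnd ℂ) (W z))
    (hre : ContDiffOn ℝ 2 (fun z => (((W z).re : ℂ))) Ω)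
    (hre0 : ∀ z ∈ Ω, (W z).re ≠ 0) :
    ∀ z ∈ Ω,
      dzbar (fun w => dz (fun s => (((W s).re : ℂ))) w / (((W w).re : ℂ))) z
        + (‖dz (fun s => (((W s).re : ℂ))) z / (((W z).re : ℂ))‖ ^ 2 : ℂ)
      = (ν z : ℂ) / 4 := by
  set u : ℂ → ℂ := fun w => (((W w).re : ℝ) : ℂ) with hu_def
  have hmem : ∀ {w : ℂ}, w ∈ Ω → Ω ∈ nhds w := fun hw => hΩ.mem_nhds hw
  have hWd : ∀ w ∈ Ω, DifferentiableAt ℝ W w := fun w hw =>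
    (hW.contDiffAt (hmem hw)).differentiableAt one_ne_zero
  have hQd : ∀ w ∈ Ω, DifferentiableAt ℝ Q₀ w := fun w hw =>
    (hQ₀.contDiffAt (hmem hw)).differentiableAt one_ne_zero
  have hud : ∀ w ∈ Ω, DifferentiableAt ℝ u w := fun w hw =>
    (hre.contDiffAt (hmem hw)).differentiableAt two_ne_zero
  have hfd : ∀ w ∈ Ω, DifferentiableAt ℝ (fun s => ((f s : ℝ) : ℂ)) w := fun w hw =>
    (hf.contDiffAt (hmem hw)).differentiableAt two_ne_zero
  have hWcd : ∀ w ∈ Ω, DifferentiableAt ℝ (fun s => (starRingEnd ℂ) (W s)) w := by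
    intro w hw
    have : (fun s => (starRingEnd ℂ) (W s)) = ⇑Complex.conjCLE ∘ W := rfl
    rw [this]
    exact Complex.conjCLE.differentiableAt.comp w (hWd w hw)
  have hQcd : ∀ w ∈ Ω, DifferentiableAt ℝ (fun s => (starRingEnd ℂ) (Q₀ s)) w := by
    intro w hw
    have : (fun s => (starRingEnd ℂ) (Q₀ s)) = ⇑Complex.conjCLE ∘ Q₀ := rfl
    rw [this]
    exact Complex.conjCLE.differentiableAt.comp w (hQd w hw)
  -- simplified Vekua equation
  have hVek : ∀ w ∈ Ω, dzbar W w = (starRingEnd ℂ) (Q₀ w) * (starRingEnd ℂ) (W w) := by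
    intro w hw
    have h1 : dzbar (fun s => ((f s : ℝ) : ℂ)) w
        = (starRingEnd ℂ) (dz (fun s => ((f s : ℝ) : ℂ)) w) := dzbar_real (hfd w hw)
    have h2 : (starRingEnd ℂ) (Q₀ w)
        = (starRingEnd ℂ) (dz (fun s => ((f s : ℝ) : ℂ)) w) / ((f w : ℝ) : ℂ) := by
      rw [← hlog w hw, map_div₀, Complex.conj_ofReal]
    rw [hVekua w hw, h1, h2]
  -- dz u on Ω
  have huW : u = fun s => (2⁻¹ : ℂ) * W s + (2⁻¹ : ℂ) * (starRingEnd ℂ) (W s) := by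
    funext s
    rw [hu_def]
    have := Complex.add_conj (W s)
    push_cast at this ⊢
    linear_combination -this / 2
  have hdzu : ∀ w ∈ Ω, dz u w = (dz W w + Q₀ w * W w) / 2 := by
    intro w hw
    rw [huW, dz_lin _ _ (hWd w hw) (hWcd w hw), dz_conj (hWd w hw), hVek w hw]
    rw [map_mul, Complex.conj_conj, Complex.conj_conj]
    ring
  -- dz u is C¹ on Ω
  have hfu : ContDiffOn ℝ 1 (fderiv ℝ u) Ω := hre.fderiv_of_isOpen hΩ le_rfl
  have hdzu_c1 : ContDiffOn ℝ 1 (fun w => dz u w) Ω := by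
    have h1 : ContDiffOn ℝ 1 (fun w => fderiv ℝ u w 1) Ω :=
      hfu.clm_apply contDiffOn_const
    have hI : ContDiffOn ℝ 1 (fun w => fderiv ℝ u w Complex.I) Ω :=
      hfu.clm_apply contDiffOn_const
    have : (fun w => dz u w)
        = fun w => (fderiv ℝ u w 1 - Complex.I * fderiv ℝ u w Complex.I) / 2 := rfl
    rw [this]
    exact (h1.sub (contDiffOn_const.mul hI)).div_const 2
  have hdzud : ∀ w ∈ Ω, DifferentiableAt ℝ (fun s => dz u s) w := fun w hw =>
    (hdzu_c1.contDiffAt (hmem hw)).differentiableAt one_ne_zero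
  -- the two first-order quantities
  set g₁ : ℂ → ℂ := fun w => 2 * dz u w - Q₀ w * W w with hg₁def
  set g₂ : ℂ → ℂ := fun w => (starRingEnd ℂ) (Q₀ w) * (starRingEnd ℂ) (W w) with hg₂def
  have hg₁d : ∀ w ∈ Ω, DifferentiableAt ℝ g₁ w := fun w hw =>
    ((hdzud w hw).const_mul 2).sub ((hQd w hw).mul (hWd w hw))
  have hg₂d : ∀ w ∈ Ω, DifferentiableAt ℝ g₂ w := fun w hw =>
    (hQcd w hw).mul (hWcd w hw)
  have hdzW : ∀ w ∈ Ω, dz W w = g₁ w := by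
    intro w hw
    rw [hg₁def]
    simp only []
    rw [hdzu w hw]; ring
  intro z hz
  -- Clairaut via the CLM-valued derivative
  set L1 : ℂ →L[ℝ] ℂ := ContinuousLinearMap.id ℝ ℂ with hL1
  set L2 : ℂ →L[ℝ] ℂ := Complex.conjCLE.toContinuousLinearMap with hL2
  set φ : ℂ → (ℂ →L[ℝ] ℂ) := fun w => g₁ w • L1 + g₂ w • L2 with hφdef
  have hφ1 : ∀ w, φ w 1 = g₁ w + g₂ w := by
    intro w
    simp [hφdef, hL1, hL2]
  have hφI : ∀ w, φ w Complex.I = g₁ w * Complex.I - g₂ w * Complex.I := by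
    intro w
    simp [hφdef, hL1, hL2, Complex.conj_I]
    ring
  have hkey : ∀ w ∈ Ω, fderiv ℝ W w = φ w := by
    intro w hw
    apply clm_ext_c
    · have hx : fderiv ℝ W w 1 = dz W w + dzbar W w := by
        simp only [dz, dzbar, pdx, pdy]; ring
      rw [hx, hφ1, hdzW w hw, hVek w hw]
    · have hy : fderiv ℝ W w Complex.I
          = Complex.I * dz W w - Complex.I * dzbar W w := by
        simp only [dz, dzbar, pdx, pdy]
        linear_combination (fderiv ℝ W w Complex.I) * Complex.I_mul_I
      rw [hy, hφI, hdzW w hw, hVek w hw]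
      ring
  have hφd : DifferentiableAt ℝ φ z :=
    ((hg₁d z hz).smul_const L1).add ((hg₂d z hz).smul_const L2)
  have hsym : fderiv ℝ φ z 1 Complex.I = fderiv ℝ φ z Complex.I 1 := by
    apply second_derivative_symmetric_of_eventually_of_real (f := W) (f' := φ) (x := z)
    · filter_upwards [hΩ.mem_nhds hz] with y hy
      have := (hWd y hy).hasFDerivAt
      rwa [hkey y hy] at this
    · exact hφd.hasFDerivAt
  have hφcd : ∀ c : ℂ, DifferentiableAt ℝ (fun w => φ w c) z := fun c =>
    hφd.clm_apply (differentiableAt_const c)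
  have hφdz : ∀ c : ℂ, dzbar (fun w => φ w c) z
      = (fderiv ℝ φ z 1 c + Complex.I * fderiv ℝ φ z Complex.I c) / 2 := by
    intro c
    simp only [dzbar, pdx, pdy, fderiv_clm_apply_const hφd]
  have hφdz' : ∀ c : ℂ, dz (fun w => φ w c) z
      = (fderiv ℝ φ z 1 c - Complex.I * fderiv ℝ φ z Complex.I c) / 2 := by
    intro c
    simp only [dz, pdx, pdy, fderiv_clm_apply_const hφd]
  -- representations of g₁ and g₂ through φ
  have hg1rep : g₁ = fun w => (2⁻¹ : ℂ) * φ w 1 + (-(2⁻¹) * Complex.I) * φ w Complex.I := by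
    funext w
    rw [hφ1, hφI]
    linear_combination (2⁻¹ * (g₁ w - g₂ w)) * Complex.I_mul_I
  have hg2rep : g₂ = fun w => (2⁻¹ : ℂ) * φ w 1 + ((2⁻¹) * Complex.I) * φ w Complex.I := by
    funext w
    rw [hφ1, hφI]
    linear_combination (-2⁻¹ * (g₁ w - g₂ w)) * Complex.I_mul_I
  have hAB : dzbar g₁ z = dz g₂ z := by
    rw [hg1rep, hg2rep,
      dzbar_lin _ _ (hφcd 1) (hφcd Complex.I),
      dz_lin _ _ (hφcd 1) (hφcd Complex.I),
      hφdz 1, hφdz Complex.I, hφdz' 1, hφdz' Complex.I]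
    linear_combination (-(Complex.I) / 2) * hsym
  -- the Schrödinger equation for u
  have hsecond : dzbar (fun w => dz u w) z = ((ν z : ℝ) : ℂ) / 4 * u z := by
    have hEq : (fun w => dz u w) =ᶠ[nhds z]
        fun w => (2⁻¹ : ℂ) * g₁ w + (2⁻¹ : ℂ) * (Q₀ w * W w) := by
      filter_upwards [hΩ.mem_nhds hz] with w hw
      rw [hg₁def]; simp only []
      ring
    rw [dzbar_congr hEq,
      dzbar_lin _ _ (G := fun w => Q₀ w * W w) (hg₁d z hz) ((hQd z hz).mul (hWd z hz)),
      dzbar_mul (hQd z hz) (hWd z hz), hAB]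
    have hg2dz : dz g₂ z = (starRingEnd ℂ) (dzbar Q₀ z) * (starRingEnd ℂ) (W z)
        + (starRingEnd ℂ) (Q₀ z) * (Q₀ z * W z) := by
      rw [hg₂def]
      rw [dz_mul (hQcd z hz) (hWcd z hz), dz_conj (hQd z hz), dz_conj (hWd z hz), hVek z hz,
        map_mul, Complex.conj_conj, Complex.conj_conj]
    rw [hg2dz, hVek z hz]
    have hr := hRic₀ z hz
    have hrconj : (starRingEnd ℂ) (dzbar Q₀ z) = dzbar Q₀ z := by
      have h' : dzbar Q₀ z = ((ν z : ℝ) : ℂ) / 4 - ((‖Q₀ z‖ : ℝ) : ℂ) ^ 2 := by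
        linear_combination hr
      rw [h']
      simp [map_div₀, Complex.conj_ofReal, map_ofNat]
    have hQQ : Q₀ z * (starRingEnd ℂ) (Q₀ z) = ((‖Q₀ z‖ : ℝ) : ℂ) ^ 2 := by
      rw [Complex.mul_conj]
      norm_cast
      exact (Complex.sq_norm _).symm
    have hadd : W z + (starRingEnd ℂ) (W z) = 2 * u z := by
      rw [hu_def]
      have := Complex.add_conj (W z)
      push_cast at this ⊢
      linear_combination this
    linear_combination (2⁻¹ * (starRingEnd ℂ) (W z)) * hrconj
      + ((W z + (starRingEnd ℂ) (W z)) / 2) * hQQ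
      + ((W z + (starRingEnd ℂ) (W z)) / 2) * hr
      + (((ν z : ℝ) : ℂ) / 8) * hadd
  -- final Riccati computation
  have hu0 : u z ≠ 0 := by
    rw [hu_def]
    exact Complex.ofReal_ne_zero.mpr (hre0 z hz)
  have hHd : DifferentiableAt ℝ (fun w => dz u w / u w) z := by
    have h1 : (fun w => dz u w / u w) = fun w => dz u w * (u w)⁻¹ := by
      funext w; rw [div_eq_mul_inv]
    rw [h1]
    exact (hdzud z hz).mul ((differentiableAt_inv hu0).comp z (hud z hz))
  have hHu : (fun w => dz u w) =ᶠ[nhds z] fun w => (dz u w / u w) * u w := by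
    filter_upwards [hΩ.mem_nhds hz] with w hw
    rw [div_mul_cancel₀]
    rw [hu_def]
    exact Complex.ofReal_ne_zero.mpr (hre0 w hw)
  have h1 : dzbar (fun w => dz u w) z
      = dzbar (fun w => dz u w / u w) z * u z + (dz u z / u z) * dzbar u z := by
    rw [dzbar_congr hHu, dzbar_mul hHd (hud z hz)]
  have h2 : dzbar u z = (starRingEnd ℂ) (dz u z) :=
    dzbar_real (g := fun w => (W w).re) (hud z hz)
  have habs : ((‖dz u z / u z‖ : ℝ) : ℂ) ^ 2
      = (dz u z / u z) * (starRingEnd ℂ) (dz u z / u z) := by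
    rw [Complex.mul_conj]
    norm_cast
    exact Complex.sq_norm _
  have hcu : (starRingEnd ℂ) (u z) = u z := by
    rw [hu_def]; exact Complex.conj_ofReal _
  show dzbar (fun w => dz u w / u w) z + ((‖dz u z / u z‖ : ℝ) : ℂ) ^ 2
      = ((ν z : ℝ) : ℂ) / 4
  rw [habs, map_div₀, hcu]
  rw [hsecond, h2] at h1
  field_simp at h1 ⊢
  linear_combination -h1
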